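/- Let θ ∈ (0,1), δ* > 0, ρ* > 0 and define γ₁(x) = (2x + ρ*²x² − ρ* x^{3/2} √(ρ*²x+8)) / (2(1−ρ*²x)) for x ∈ [0,δ*] and γ₁(x) = θx for x > δ*, with ρ* chosen so that γ₁ is continuous. Then the function z(x) = x − γ₁(x) is continuous and strictly increasing on [0,∞) with z(0)=0. -/

import Mathlib

open Real Set

/-!
On `[0, δ*]` one has `x - γ₁ x = ρ x^{3/2} (√(ρ²x+8) - 3ρ√x) / (2(1 - ρ²x))`, and rationalising
(`(ρ²x+8) - 9ρ²x = 8(1 - ρ²x)`) gives `x - γ₁ x = 4ρ x^{3/2} / (√(ρ²x+8) + 3ρ√x)`. For `x > 0` this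
equals `4ρx / (√(ρ² + 8/x) + 3ρ)`, whose numerator increases and denominator decreases in `x`.
Beyond `δ*` the function is `(1 - θ) x`, and the matching condition glues the two pieces at `δ*`.
-/

lemma rpow_three_halves {x : ℝ} (hx : 0 ≤ x) : x ^ ((3:ℝ)/2) = x * √x := by
  rw [sqrt_eq_rpow, show (3:ℝ)/2 = 1 + 1/2 by norm_num, rpow_add' hx (by norm_num), rpow_one]

noncomputable def lowerGap (ρ x : ℝ) : ℝ := 4 * ρ * (x * √x) / (√(ρ^2 * x + 8) + 3 * ρ * √x)

lemma lowerGap_denom_pos {ρ : ℝ} (hρ : 0 ≤ ρ) {x : ℝ} (hx : 0 ≤ x) :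
    0 < √(ρ^2 * x + 8) + 3 * ρ * √x := by
  have : 0 < √(ρ^2 * x + 8) := sqrt_pos.mpr (by positivity)
  positivity

lemma sub_lowerBoundary_eq_lowerGap {ρ x : ℝ} (hρ : 0 ≤ ρ) (hx : 0 ≤ x) (h1 : ρ^2 * x < 1) :
    x - (2*x + ρ^2*x^2 - ρ * x ^ ((3:ℝ)/2) * √(ρ^2*x + 8)) / (2*(1 - ρ^2*x)) = lowerGap ρ x := by
  have hs : √x ^ 2 = x := sq_sqrt hx
  have ht : √(ρ^2*x+8) ^ 2 = ρ^2*x+8 := sq_sqrt (by positivity)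
  rw [lowerGap, rpow_three_halves hx, eq_div_iff (lowerGap_denom_pos hρ hx).ne',
    sub_div' (by nlinarith), div_mul_eq_mul_div, div_eq_iff (by nlinarith)]
  linear_combination (x*ρ*√x)*ht + (3*x*ρ^2*√(ρ^2*x+8))*hs

lemma lowerGap_zero (ρ : ℝ) : lowerGap ρ 0 = 0 := by simp [lowerGap]

lemma lowerGap_eq_of_pos {ρ x : ℝ} (hx : 0 < x) :
    lowerGap ρ x = 4 * ρ * x / (√(ρ^2 + 8 / x) + 3 * ρ) := by
  have hsx : 0 < √x := sqrt_pos.mpr hx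
  have : ρ^2 * x + 8 = x * (ρ^2 + 8 / x) := by field_simp
  rw [lowerGap, this, sqrt_mul hx.le]
  field_simp

lemma lowerGap_pos {ρ x : ℝ} (hρ : 0 < ρ) (hx : 0 < x) : 0 < lowerGap ρ x := by
  rw [lowerGap_eq_of_pos hx]
  positivity

lemma continuousOn_lowerGap {ρ : ℝ} (hρ : 0 ≤ ρ) : ContinuousOn (lowerGap ρ) (Ici 0) :=
  ContinuousOn.div (by fun_prop) (by fun_prop) fun _ hx ↦ (lowerGap_denom_pos hρ hx).ne'

lemma strictMonoOn_lowerGap {ρ : ℝ} (hρ : 0 < ρ) : StrictMonoOn (lowerGap ρ) (Ici 0) := by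
  intro a ha b _ hab
  have hb0 : 0 < b := lt_of_le_of_lt ha hab
  rcases (mem_Ici.mp ha).eq_or_lt with rfl | ha0
  · rw [lowerGap_zero]
    exact lowerGap_pos hρ hb0
  rw [lowerGap_eq_of_pos ha0, lowerGap_eq_of_pos hb0]
  apply div_lt_div₀ (by gcongr) _ (by positivity) (by positivity)
  gcongr

theorem stmt1 (θ δ ρ : ℝ) (hθ : θ ∈ Set.Ioo (0:ℝ) 1) (hδ : 0 < δ) (hρ : 0 < ρ)
    (hpos : ∀ x ∈ Set.Icc (0:ℝ) δ, ρ^2 * x < 1)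
    (γ₁ : ℝ → ℝ)
    (hdef : ∀ x ∈ Set.Icc (0:ℝ) δ,
      γ₁ x = (2*x + ρ^2*x^2 - ρ * x ^ ((3:ℝ)/2) * Real.sqrt (ρ^2*x + 8)) / (2*(1 - ρ^2*x)))
    (hdef2 : ∀ x, δ < x → γ₁ x = θ * x)
    (hmatch : (2*δ + ρ^2*δ^2 - ρ * δ ^ ((3:ℝ)/2) * Real.sqrt (ρ^2*δ + 8)) / (2*(1 - ρ^2*δ))
      = θ * δ) :
    ContinuousOn (fun x => x - γ₁ x) (Set.Ici 0) ∧
    StrictMonoOn (fun x => x - γ₁ x) (Set.Ici 0) ∧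
    (0:ℝ) - γ₁ 0 = 0 := by
  have hlow : EqOn (fun x ↦ x - γ₁ x) (lowerGap ρ) (Icc 0 δ) := fun x hx ↦ by
    simp only [hdef x hx, sub_lowerBoundary_eq_lowerGap hρ.le hx.1 (hpos x hx)]
  have hhigh : EqOn (fun x ↦ x - γ₁ x) (fun x ↦ (1 - θ) * x) (Ici δ) := fun x hx ↦ by
    rcases (mem_Ici.mp hx).eq_or_lt with rfl | hx
    · simp only [hdef δ ⟨hδ.le, le_rfl⟩, hmatch]; ring
    · simp only [hdef2 x hx]; ring
  have hlin : StrictMono fun x : ℝ ↦ (1 - θ) * x := strictMono_mul_left_of_pos (by linarith [hθ.2])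
  rw [← Icc_union_Ici_eq_Ici hδ.le]
  refine ⟨?_, ?_, by simpa [lowerGap_zero] using hlow ⟨le_rfl, hδ.le⟩⟩
  · exact ((continuousOn_lowerGap hρ.le).mono Icc_subset_Ici_self |>.congr hlow).union_of_isClosed
      ((by fun_prop : ContinuousOn (fun x : ℝ ↦ (1 - θ) * x) _).congr hhigh) isClosed_Icc isClosed_Ici
  · exact (hlow.congr_strictMonoOn.mpr ((strictMonoOn_lowerGap hρ).mono Icc_subset_Ici_self)).union
      (hhigh.congr_strictMonoOn.mpr (hlin.strictMonoOn _)) (isGreatest_Icc hδ.le) isLeast_Ici
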